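/- arXiv:2202.13054 — 2 statements merged into one kernel-verified Lean document; each statement's English description precedes it below -/
import Mathlib

section
/- （Equation proof:gz2: factorization of the sampled triple）Assume the coordinates X₁,…,X_p of X are mutually conditionally independent given Z: for all x ∈ 𝒳 and z ∈ 𝒵^T, P_{X|Z}(x; z) = Π_{i=1}^p P_{X_i|Z}(x_i; z). Define the systematic-scan Gibbs kernel K(z'; x, ẑ) := Π_{i=0}^{T-1} P_{Z_{T-i}|X,Z_{T-i+1:T},Z_{1:T-i-1}}(z'_{T-i}; x, ẑ_{T-i+1:T}, z'_{1:T-i-1}), and define Q(x̂, x̃, z') := P_{X|Z}(x̃; z') · Σ_{ẑ∈𝒵^T} K(z'; x̂, ẑ) · P_{Z,X}(ẑ, x̂). Then for all x̂, x̃ ∈ 𝒳 and z' ∈ 𝒵^T: Q(x̂, x̃, z') = P_Z(z') · Π_{i=1}^p P_{X_i|Z}(x̂_i; z') · Π_{i=1}^p P_{X_i|Z}(x̃_i; z'). -/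
open Finset

/-- `mergeLT i zlo zhi` agrees with `zlo` on coordinates `< i` and with `zhi` elsewhere. -/
def mergeLT {𝒵 : Type*} {T : ℕ} (i : Fin T) (zlo zhi : Fin T → 𝒵) : Fin T → 𝒵 :=
  fun j => if (j : ℕ) < (i : ℕ) then zlo j else zhi j

/-- The full conditional `P_{Z_i ∣ X, Z_{1:i-1}, Z_{i+1:T}}(c ; x, zlo_{1:i-1}, zhi_{i+1:T})`. -/
noncomputable def condZ {𝒳 𝒵 : Type*} [Fintype 𝒵] {T : ℕ}
    (P : 𝒳 × (Fin T → 𝒵) → ℝ) (x : 𝒳) (zlo zhi : Fin T → 𝒵) (i : Fin T) (c : 𝒵) : ℝ :=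
  P (x, Function.update (mergeLT i zlo zhi) i c) /
    ∑ c' : 𝒵, P (x, Function.update (mergeLT i zlo zhi) i c')

/-- The systematic-scan Gibbs kernel
`K(z'; x, ẑ) = Π_{i=0}^{T-1} P_{Z_{T-i}∣X,Z_{T-i+1:T},Z_{1:T-i-1}}(z'_{T-i}; x, ẑ_{T-i+1:T}, z'_{1:T-i-1})`. -/
noncomputable def gibbs {𝒳 𝒵 : Type*} [Fintype 𝒵] {T : ℕ}
    (P : 𝒳 × (Fin T → 𝒵) → ℝ) (x : 𝒳) (zh z' : Fin T → 𝒵) : ℝ :=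
  ∏ i : Fin T, condZ P x z' zh i (z' i)

/-- The marginal `P_Z(z) = Σ_x P(x, z)`. -/
noncomputable def margZ {𝒳 𝒵 : Type*} [Fintype 𝒳] [Fintype 𝒵] {T : ℕ}
    (P : 𝒳 × (Fin T → 𝒵) → ℝ) (z : Fin T → 𝒵) : ℝ :=
  ∑ x : 𝒳, P (x, z)

/-- The conditional `P_{X_i∣Z}(x_i; z)`: the probability of `(x_i, z)` (summing `P` over
the other coordinates of `x`) divided by `P_Z(z)`. -/
noncomputable def condXi {𝒵 : Type*} [Fintype 𝒵] {T p : ℕ} {𝒳 : Fin p → Type*}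
    [∀ i, Fintype (𝒳 i)] [∀ i, DecidableEq (𝒳 i)]
    (P : (∀ i, 𝒳 i) × (Fin T → 𝒵) → ℝ) (i : Fin p) (xi : 𝒳 i) (z : Fin T → 𝒵) : ℝ :=
  (∑ x : ∀ j, 𝒳 j, if x i = xi then P (x, z) else 0) / margZ P z

/-- merge at a natural-number cut point -/
def mK {𝒵 : Type*} {T : ℕ} (k : ℕ) (zlo zhi : Fin T → 𝒵) : Fin T → 𝒵 :=
  fun j => if (j : ℕ) < k then zlo j else zhi j

noncomputable def Afun {𝒳 𝒵 : Type*} [Fintype 𝒵] {T : ℕ}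
    (P : 𝒳 × (Fin T → 𝒵) → ℝ) (x : 𝒳) (z' : Fin T → 𝒵) (k : ℕ) : ℝ :=
  ∑ zh : Fin T → 𝒵,
    (∏ i ∈ univ.filter (fun i : Fin T => k ≤ (i : ℕ)), condZ P x z' zh i (z' i)) *
      P (x, mK k z' zh)

lemma sum_update_mul {α : Type*} [Fintype α] {T : ℕ} (k : Fin T) (f : (Fin T → α) → ℝ) :
    ∑ zh : Fin T → α, ∑ c : α, f (Function.update zh k c)
      = (Fintype.card α : ℝ) * ∑ zh : Fin T → α, f zh := by
  have hbij : Function.Bijective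
      (fun p : (Fin T → α) × α => ((Function.update p.1 k p.2, p.1 k) : (Fin T → α) × α)) := by
    constructor
    · rintro ⟨zh, c⟩ ⟨zh', c'⟩ h
      simp only [Prod.mk.injEq] at h
      obtain ⟨h1, h2⟩ := h
      have hc : c = c' := by
        have := congrFun h1 k; simpa using this
      subst hc
      refine Prod.ext ?_ rfl
      funext j
      by_cases hj : j = k
      · subst hj; exact h2
      · have := congrFun h1 j; simpa [Function.update_of_ne hj] using this
    · rintro ⟨g, a⟩
      refine ⟨(Function.update g k a, g k), ?_⟩
      simp [Function.update_idem]
  have := hbij.sum_comp (fun q : (Fin T → α) × α => f q.1)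
  calc ∑ zh : Fin T → α, ∑ c : α, f (Function.update zh k c)
      = ∑ p : (Fin T → α) × α, f (Function.update p.1 k p.2) := by
        rw [Fintype.sum_prod_type]
    _ = ∑ q : (Fin T → α) × α, f q.1 := this
    _ = (Fintype.card α : ℝ) * ∑ zh : Fin T → α, f zh := by
        rw [Fintype.sum_prod_type]
        simp [Finset.sum_const, mul_comm, Finset.mul_sum]

section
variable {𝒳 𝒵 : Type*} [Fintype 𝒵] {T : ℕ} (P : 𝒳 × (Fin T → 𝒵) → ℝ)

lemma Afun_step (hpos : ∀ a, 0 < P a) [Nonempty 𝒵] (x : 𝒳) (z' : Fin T → 𝒵)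
    (k : ℕ) (hk : k < T) :
    (Fintype.card 𝒵 : ℝ) * Afun P x z' k = Afun P x z' (k + 1) := by
  classical
  set kf : Fin T := ⟨k, hk⟩ with hkf
  -- rewrite via sum_update_mul
  rw [Afun, ← sum_update_mul kf]
  rw [Afun]
  congr 1
  funext zh
  -- split the product
  have hfilter : (univ.filter (fun i : Fin T => k ≤ (i : ℕ)))
      = insert kf (univ.filter (fun i : Fin T => k + 1 ≤ (i : ℕ))) := by
    ext i
    simp only [mem_filter, mem_univ, true_and, mem_insert]
    constructor
    · intro h
      rcases eq_or_lt_of_le h with h | h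
      · left; exact Fin.ext h.symm
      · right; omega
    · rintro (rfl | h)
      · exact le_refl _
      · omega
  have hkf_not : kf ∉ univ.filter (fun i : Fin T => k + 1 ≤ (i : ℕ)) := by
    simp [hkf]
  -- pointwise facts
  have keyA : ∀ (c : 𝒵) (i : Fin T), k + 1 ≤ (i : ℕ) →
      mergeLT i z' (Function.update zh kf c) = mergeLT i z' zh := by
    intro c i hi
    funext j
    by_cases hj : (j : ℕ) < (i : ℕ)
    · simp [mergeLT, hj]
    · have hjk : j ≠ kf := by
        intro h; subst h; simp [hkf] at hj; omega
      simp [mergeLT, hj, Function.update_of_ne hjk]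
  have keyB : ∀ (c c'' : 𝒵),
      Function.update (mergeLT kf z' (Function.update zh kf c)) kf c''
        = Function.update (mergeLT kf z' zh) kf c'' := by
    intro c c''
    funext j
    by_cases hj : j = kf
    · subst hj; simp
    · have hj' := hj
      simp only [Function.update_of_ne hj]
      by_cases hlt : (j : ℕ) < (kf : ℕ)
      · simp [mergeLT, hlt]
      · simp [mergeLT, hlt, Function.update_of_ne hj]
  have keyC : ∀ c : 𝒵, mK k z' (Function.update zh kf c)
      = Function.update (mergeLT kf z' zh) kf c := by
    intro c
    funext j
    by_cases hj : j = kf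
    · subst hj; simp [mK, hkf]
    · have hjk : (j : ℕ) ≠ k := fun h => hj (Fin.ext h)
      simp only [Function.update_of_ne hj]
      by_cases hlt : (j : ℕ) < k
      · simp [mK, hlt, mergeLT, hkf, Function.update_of_ne hj]
      · simp [mK, hlt, mergeLT, hkf, Function.update_of_ne hj, Function.update_of_ne (show j ≠ ⟨k, hk⟩ from hj)]
  have keyD : Function.update (mergeLT kf z' zh) kf (z' kf) = mK (k + 1) z' zh := by
    funext j
    by_cases hj : j = kf
    · subst hj; simp [mK, hkf]
    · have hjk : (j : ℕ) ≠ k := fun h => hj (Fin.ext h)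
      simp only [Function.update_of_ne hj]
      by_cases hlt : (j : ℕ) < k
      · have : (j : ℕ) < k + 1 := by omega
        simp [mK, mergeLT, hkf, hlt, this]
      · have : ¬ (j : ℕ) < k + 1 := by omega
        simp [mK, mergeLT, hkf, hlt, this]
  -- compute the inner sum over c
  have hsummand : ∀ c : 𝒵,
      (∏ i ∈ univ.filter (fun i : Fin T => k ≤ (i : ℕ)),
          condZ P x z' (Function.update zh kf c) i (z' i)) *
        P (x, mK k z' (Function.update zh kf c))
      = (condZ P x z' zh kf (z' kf) *
          ∏ i ∈ univ.filter (fun i : Fin T => k + 1 ≤ (i : ℕ)), condZ P x z' zh i (z' i)) *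
        P (x, Function.update (mergeLT kf z' zh) kf c) := by
    intro c
    rw [hfilter, Finset.prod_insert hkf_not, keyC c]
    congr 2
    · unfold condZ
      rw [keyB c (z' kf)]
      congr 1
      refine Finset.sum_congr rfl ?_
      intro c' _
      rw [keyB c c']
    · refine Finset.prod_congr rfl ?_
      intro i hi
      simp only [mem_filter, mem_univ, true_and] at hi
      unfold condZ
      rw [keyA c i hi]
  rw [Finset.sum_congr rfl (fun c _ => hsummand c)]
  rw [← Finset.mul_sum]
  have hden : (0 : ℝ) < ∑ c' : 𝒵, P (x, Function.update (mergeLT kf z' zh) kf c') :=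
    Finset.sum_pos (fun c' _ => hpos _) univ_nonempty
  have : condZ P x z' zh kf (z' kf) *
      ∑ c : 𝒵, P (x, Function.update (mergeLT kf z' zh) kf c)
      = P (x, Function.update (mergeLT kf z' zh) kf (z' kf)) := by
    unfold condZ
    field_simp
  rw [← keyD, ← this]
  ring

lemma Afun_top [Nonempty 𝒵] (x : 𝒳) (z' : Fin T → 𝒵) :
    Afun P x z' T = (Fintype.card 𝒵 : ℝ) ^ T * P (x, z') := by
  classical
  have hempty : (univ.filter (fun i : Fin T => T ≤ (i : ℕ))) = ∅ := by
    ext i; simp only [mem_filter, mem_univ, true_and, notMem_empty, iff_false]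
    omega
  have hmk : ∀ zh : Fin T → 𝒵, mK T z' zh = z' := by
    intro zh; funext j; simp [mK, j.isLt]
  unfold Afun
  simp only [hempty, Finset.prod_empty, one_mul, hmk]
  rw [Finset.sum_const, card_univ, nsmul_eq_mul, Fintype.card_fun, Fintype.card_fin]
  push_cast
  ring

lemma Afun_zero {𝒳 𝒵 : Type*} [Fintype 𝒵] {T : ℕ} (P : 𝒳 × (Fin T → 𝒵) → ℝ)
    (x : 𝒳) (z' : Fin T → 𝒵) :
    Afun P x z' 0 = ∑ zh : Fin T → 𝒵, gibbs P x zh z' * P (x, zh) := by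
  unfold Afun gibbs
  refine Finset.sum_congr rfl ?_
  intro zh _
  rw [Finset.filter_true_of_mem (fun i _ => Nat.zero_le _)]
  rfl

lemma gibbs_sum (hpos : ∀ a, 0 < P a) [Nonempty 𝒵] (x : 𝒳) (z' : Fin T → 𝒵) :
    ∑ zh : Fin T → 𝒵, gibbs P x zh z' * P (x, zh) = P (x, z') := by
  classical
  have key : ∀ d k, k + d = T →
      (Fintype.card 𝒵 : ℝ) ^ d * Afun P x z' k = (Fintype.card 𝒵 : ℝ) ^ T * P (x, z') := by
    intro d
    induction d with
    | zero =>
      intro k hk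
      subst hk
      simpa using Afun_top P x z'
    | succ n ih =>
      intro k hk
      have hkT : k < T := by omega
      have h1 : k + 1 + n = T := by omega
      calc (Fintype.card 𝒵 : ℝ) ^ (n + 1) * Afun P x z' k
          = (Fintype.card 𝒵 : ℝ) ^ n * ((Fintype.card 𝒵 : ℝ) * Afun P x z' k) := by ring
        _ = (Fintype.card 𝒵 : ℝ) ^ n * Afun P x z' (k + 1) := by
            rw [Afun_step P hpos x z' k hkT]
        _ = (Fintype.card 𝒵 : ℝ) ^ T * P (x, z') := ih (k + 1) h1
  have h0 := key T 0 (by omega)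
  have hcard : (0 : ℝ) < (Fintype.card 𝒵 : ℝ) ^ T := by
    have : 0 < Fintype.card 𝒵 := Fintype.card_pos
    positivity
  rw [← Afun_zero P x z']
  exact mul_left_cancel₀ (ne_of_gt hcard) h0

end

/-- Equation proof:gz2 (factorization of the sampled triple).  Assume the coordinates of `X`
are mutually conditionally independent given `Z`: `P_{X∣Z}(x; z) = Π_{i=1}^p P_{X_i∣Z}(x_i; z)`.
With `K` the systematic-scan Gibbs kernel and
`Q(x̂, x̃, z') = P_{X∣Z}(x̃; z') · Σ_{ẑ} K(z'; x̂, ẑ) · P_{Z,X}(ẑ, x̂)`, we have for all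
`x̂, x̃, z'`: `Q(x̂, x̃, z') = P_Z(z') · Π_i P_{X_i∣Z}(x̂_i; z') · Π_i P_{X_i∣Z}(x̃_i; z')`. -/
theorem sampled_triple_factorization {𝒵 : Type*} [Fintype 𝒵] {T p : ℕ}
    {𝒳 : Fin p → Type*} [∀ i, Fintype (𝒳 i)] [∀ i, DecidableEq (𝒳 i)]
    (hT : 0 < T) (hp : 0 < p)
    (P : (∀ i, 𝒳 i) × (Fin T → 𝒵) → ℝ)
    (hpos : ∀ a, 0 < P a) (hsum : ∑ a, P a = 1)
    (hci : ∀ (x : ∀ i, 𝒳 i) (z : Fin T → 𝒵),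
      P (x, z) / margZ P z = ∏ i : Fin p, condXi P i (x i) z) :
    ∀ (xh xt : ∀ i, 𝒳 i) (z' : Fin T → 𝒵),
      (P (xt, z') / margZ P z') * (∑ zh : Fin T → 𝒵, gibbs P xh zh z' * P (xh, zh))
        = margZ P z' * (∏ i : Fin p, condXi P i (xh i) z') *
            (∏ i : Fin p, condXi P i (xt i) z') := by

  intro xh xt z'
  have hne : Nonempty ((∀ i, 𝒳 i) × (Fin T → 𝒵)) := by
    by_contra h
    rw [not_nonempty_iff] at h
    haveI := h
    rw [Finset.univ_eq_empty, Finset.sum_empty] at hsum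
    norm_num at hsum
  obtain ⟨⟨x0, zf⟩⟩ := hne
  haveI : Nonempty 𝒵 := ⟨zf ⟨0, hT⟩⟩
  haveI : Nonempty (∀ i, 𝒳 i) := ⟨x0⟩
  have hm : 0 < margZ P z' := Finset.sum_pos (fun _ _ => hpos _) univ_nonempty
  rw [gibbs_sum P hpos xh z', ← hci xh z', ← hci xt z']
  field_simp
end

section
/- （Theorem gz: pairwise exchangeability of the imputed sample and the resample）Assume the coordinates X₁,…,X_p of X are mutually conditionally independent given Z: P_{X|Z}(x; z) = Π_{i=1}^p P_{X_i|Z}(x_i; z) for all x, z. Define the systematic-scan Gibbs kernel K(z'; x, ẑ) := Π_{i=0}^{T-1} P_{Z_{T-i}|X,Z_{T-i+1:T},Z_{1:T-i-1}}(z'_{T-i}; x, ẑ_{T-i+1:T}, z'_{1:T-i-1}), and let Q(x̂, x̃, z') := P_{X|Z}(x̃; z') · Σ_{ẑ∈𝒵^T} K(z'; x̂, ẑ) · P_{Z,X}(ẑ, x̂) be the joint pmf of the triple (X̂, X̃, Z') produced by: starting from (X̂, Ẑ) distributed as (X, Z), performing one full Gibbs sweep on Z conditioned on X̂ to get Z',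 and sampling X̃ ∼ P_{X|Z}(·; Z'). Then X̂ and X̃ are pairwise exchangeable: for every subset S ⊆ {1,…,p} and all x̂, x̃ ∈ 𝒳, Σ_{z'∈𝒵^T} Q((x̂, x̃)_S, z') = Σ_{z'∈𝒵^T} Q(x̂, x̃, z'), where (a, b)_S denotes the pair obtained by swapping the i-th coordinates of a and b for every i ∈ S. -/
open Finset

/-- The joint pmf `Q(x̂, x̃, z') = P_{X∣Z}(x̃; z') · Σ_{ẑ} K(z'; x̂, ẑ) · P_{Z,X}(ẑ, x̂)` of
the triple `(X̂, X̃, Z')` produced by one full Gibbs sweep on `Z` conditioned on `X̂`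
followed by resampling `X̃ ∼ P_{X∣Z}(·; Z')`. -/
noncomputable def Q {𝒵 : Type*} [Fintype 𝒵] {T p : ℕ} {𝒳 : Fin p → Type*}
    [∀ i, Fintype (𝒳 i)]
    (P : (∀ i, 𝒳 i) × (Fin T → 𝒵) → ℝ)
    (xh xt : ∀ i, 𝒳 i) (z' : Fin T → 𝒵) : ℝ :=
  (P (xt, z') / margZ P z') * ∑ zh : Fin T → 𝒵, gibbs P xh zh z' * P (xh, zh)

def mergeN {𝒵 : Type*} {T : ℕ} (k : ℕ) (zlo zhi : Fin T → 𝒵) : Fin T → 𝒵 :=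
  fun j => if (j : ℕ) < k then zlo j else zhi j

lemma sum_card_mul {𝒵 : Type*} [Fintype 𝒵] {T : ℕ} (k : Fin T)
    (F : (Fin T → 𝒵) → ℝ) :
    (Fintype.card 𝒵 : ℝ) * ∑ zh, F zh = ∑ zh, ∑ c, F (Function.update zh k c) := by
  have h2 : ∑ q : (Fin T → 𝒵) × 𝒵, F (Function.update q.1 k q.2)
      = ∑ q : (Fin T → 𝒵) × 𝒵, F q.1 := by
    apply Fintype.sum_bijective
      (fun q : (Fin T → 𝒵) × 𝒵 => (Function.update q.1 k q.2, q.1 k))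
    · exact Function.Involutive.bijective (fun q => by
        simp)
    · intro q; rfl
  have e2 : ∑ zh : Fin T → 𝒵, ∑ c : 𝒵, F (Function.update zh k c)
      = ∑ q : (Fin T → 𝒵) × 𝒵, F (Function.update q.1 k q.2) :=
    (Fintype.sum_prod_type (f := fun q : (Fin T → 𝒵) × 𝒵 => F (Function.update q.1 k q.2))).symm
  have e1 : ∑ q : (Fin T → 𝒵) × 𝒵, F q.1
      = (Fintype.card 𝒵 : ℝ) * ∑ zh : Fin T → 𝒵, F zh := by
    rw [Fintype.sum_prod_type]
    simp [Finset.mul_sum, mul_comm]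
  rw [e2, h2, e1]

lemma condZ_update {𝒳 𝒵 : Type*} [Fintype 𝒵] {T : ℕ}
    (P : 𝒳 × (Fin T → 𝒵) → ℝ) (x : 𝒳) (z' zh : Fin T → 𝒵) (k i : Fin T)
    (hk : (k : ℕ) ≤ (i : ℕ)) (c : 𝒵) (c' : 𝒵) :
    condZ P x z' (Function.update zh k c) i c' = condZ P x z' zh i c' := by
  have hm : ∀ c'' : 𝒵, Function.update (mergeLT i z' (Function.update zh k c)) i c''
      = Function.update (mergeLT i z' zh) i c'' := by
    intro c''; funext j
    rcases eq_or_ne j i with rfl | hj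
    · simp
    · rw [Function.update_of_ne hj, Function.update_of_ne hj]
      unfold mergeLT
      by_cases h : (j : ℕ) < (i : ℕ)
      · simp [h]
      · have hji : (j : ℕ) ≠ (i : ℕ) := fun h' => hj (Fin.ext h')
        have hjk : j ≠ k := fun h' => by
          have : (j : ℕ) = (k : ℕ) := congrArg Fin.val h'
          omega
        simp [h, Function.update_of_ne hjk]
  simp only [condZ, hm]

lemma gibbs_inv {𝒳 : Type*} {𝒵 : Type*} [Fintype 𝒵] [Nonempty 𝒵] {T : ℕ}
    (P : 𝒳 × (Fin T → 𝒵) → ℝ) (hpos : ∀ a, 0 < P a)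
    (x : 𝒳) (z' : Fin T → 𝒵) :
    ∑ zh : Fin T → 𝒵, gibbs P x zh z' * P (x, zh) = P (x, z') := by
  set L : ℕ → ℝ := fun k => ∑ zh : Fin T → 𝒵,
    (∏ i ∈ univ.filter (fun i : Fin T => k ≤ (i : ℕ)), condZ P x z' zh i (z' i))
      * P (x, mergeN k z' zh) with hL
  have hstep : ∀ k, k < T → L (k + 1) = (Fintype.card 𝒵 : ℝ) * L k := by
    intro k hk
    set kF : Fin T := ⟨k, hk⟩ with hkF
    have hkv : (kF : ℕ) = k := rfl
    set R : (Fin T → 𝒵) → ℝ := fun zh =>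
      ∏ i ∈ univ.filter (fun i : Fin T => k + 1 ≤ (i : ℕ)), condZ P x z' zh i (z' i) with hR
    set D : (Fin T → 𝒵) → ℝ := fun zh =>
      ∑ c : 𝒵, P (x, Function.update (mergeN (k+1) z' zh) kF c) with hD
    have hfilter : univ.filter (fun i : Fin T => k ≤ (i : ℕ))
        = insert kF (univ.filter (fun i : Fin T => k + 1 ≤ (i : ℕ))) := by
      ext i
      simp only [Finset.mem_filter, Finset.mem_univ, true_and, Finset.mem_insert, Fin.ext_iff,
        hkv]
      omega
    have hknot : kF ∉ univ.filter (fun i : Fin T => k + 1 ≤ (i : ℕ)) := by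
      simp [hkv]
    -- merge facts
    have hmerge2 : ∀ (zh : Fin T → 𝒵) (c : 𝒵),
        mergeN (k+1) z' (Function.update zh kF c) = mergeN (k+1) z' zh := by
      intro zh c; funext j
      unfold mergeN
      by_cases h : (j : ℕ) < k + 1
      · simp [h]
      · have hjk : j ≠ kF := fun h' => by
          have : (j : ℕ) = k := by rw [h']
          omega
        simp [h, Function.update_of_ne hjk]
    have hmerge1 : ∀ zh : Fin T → 𝒵,
        mergeN k z' zh = Function.update (mergeN (k+1) z' zh) kF (zh kF) := by
      intro zh; funext j
      rcases eq_or_ne j kF with rfl | hj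
      · simp [mergeN, hkv]
      · rw [Function.update_of_ne hj]
        have hjv : (j : ℕ) ≠ k := fun h' => hj (Fin.ext h')
        unfold mergeN
        by_cases h : (j : ℕ) < k
        · have h2 : (j : ℕ) < k + 1 := by omega
          simp [h, h2]
        · have h2 : ¬ (j : ℕ) < k + 1 := by omega
          simp [h, h2]
    have humerge : ∀ (zh : Fin T → 𝒵) (c : 𝒵),
        Function.update (mergeLT kF z' zh) kF c
          = Function.update (mergeN (k+1) z' zh) kF c := by
      intro zh c; funext j
      rcases eq_or_ne j kF with rfl | hj
      · simp
      · rw [Function.update_of_ne hj, Function.update_of_ne hj]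
        have hjv : (j : ℕ) ≠ k := fun h' => hj (Fin.ext h')
        unfold mergeLT mergeN
        by_cases h : (j : ℕ) < k
        · have h2 : (j : ℕ) < k + 1 := by omega
          simp [hkv, h, h2]
        · have h2 : ¬ (j : ℕ) < k + 1 := by omega
          simp [hkv, h, h2]
    have hnum : ∀ zh : Fin T → 𝒵,
        Function.update (mergeN (k+1) z' zh) kF (z' kF) = mergeN (k+1) z' zh := by
      intro zh; funext j
      rcases eq_or_ne j kF with rfl | hj
      · simp [mergeN, hkv]
      · rw [Function.update_of_ne hj]
    have hDpos : ∀ zh, 0 < D zh := by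
      intro zh
      exact Finset.sum_pos (fun c _ => hpos _) (by simp)
    have hcond : ∀ zh : Fin T → 𝒵,
        condZ P x z' zh kF (z' kF) = P (x, mergeN (k+1) z' zh) / D zh := by
      intro zh
      unfold condZ
      simp only [humerge, hnum, hD]
    -- rewrite L k
    have hLk : L k = ∑ zh : Fin T → 𝒵,
        (condZ P x z' zh kF (z' kF) * R zh)
          * P (x, Function.update (mergeN (k+1) z' zh) kF (zh kF)) := by
      rw [hL]
      refine Finset.sum_congr rfl (fun zh _ => ?_)
      rw [hfilter, Finset.prod_insert hknot, hmerge1]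
    rw [hLk, sum_card_mul kF]
    rw [hL]
    refine Finset.sum_congr rfl (fun zh _ => ?_)
    symm
    have hsummand : ∀ c : 𝒵,
        (condZ P x z' (Function.update zh kF c) kF (z' kF) * R (Function.update zh kF c))
          * P (x, Function.update (mergeN (k+1) z' (Function.update zh kF c)) kF
              ((Function.update zh kF c) kF))
        = (condZ P x z' zh kF (z' kF) * R zh)
          * P (x, Function.update (mergeN (k+1) z' zh) kF c) := by
      intro c
      rw [hmerge2, Function.update_self]
      congr 1
      congr 1
      · exact condZ_update P x z' zh kF kF le_rfl c _
      · exact Finset.prod_congr rfl (fun i hi => by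
          exact condZ_update P x z' zh kF i (by
            simp only [Finset.mem_filter] at hi; omega) c _)
    calc ∑ c : 𝒵, (condZ P x z' (Function.update zh kF c) kF (z' kF)
            * R (Function.update zh kF c))
          * P (x, Function.update (mergeN (k+1) z' (Function.update zh kF c)) kF
              ((Function.update zh kF c) kF))
        = ∑ c : 𝒵, (condZ P x z' zh kF (z' kF) * R zh)
            * P (x, Function.update (mergeN (k+1) z' zh) kF c) := by
          exact Finset.sum_congr rfl (fun c _ => hsummand c)
      _ = (condZ P x z' zh kF (z' kF) * R zh) * D zh := by
          rw [hD, ← Finset.mul_sum]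
      _ = R zh * P (x, mergeN (k+1) z' zh) := by
          rw [hcond, div_mul_eq_mul_div, div_mul_cancel₀ _ (ne_of_gt (hDpos zh)), mul_comm]
  have hiter : ∀ k, k ≤ T → L k = (Fintype.card 𝒵 : ℝ) ^ k * L 0 := by
    intro k
    induction k with
    | zero => intro _; simp
    | succ n ih =>
      intro h
      rw [hstep n (by omega), ih (by omega), pow_succ]
      ring
  have hLT : L T = (Fintype.card 𝒵 : ℝ) ^ T * P (x, z') := by
    rw [hL]
    have hf : univ.filter (fun i : Fin T => T ≤ (i : ℕ)) = ∅ := by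
      ext i; simp [Nat.not_le.mpr i.isLt]
    have hmT : ∀ zh : Fin T → 𝒵, mergeN T z' zh = z' := by
      intro zh; funext j; simp [mergeN, j.isLt]
    simp only [hf, Finset.prod_empty, one_mul, hmT]
    rw [Finset.sum_const, Finset.card_univ]
    simp [Fintype.card_fun]
  have hL0 : L 0 = ∑ zh : Fin T → 𝒵, gibbs P x zh z' * P (x, zh) := by
    rw [hL]
    have hf : univ.filter (fun i : Fin T => 0 ≤ (i : ℕ)) = univ := by
      ext i; simp
    have hm0 : ∀ zh : Fin T → 𝒵, mergeN 0 z' zh = zh := by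
      intro zh; funext j; simp [mergeN]
    simp only [hf, hm0, gibbs]
  have hcard : (0 : ℝ) < (Fintype.card 𝒵 : ℝ) ^ T := by
    have : 0 < Fintype.card 𝒵 := Fintype.card_pos
    positivity
  have := hiter T le_rfl
  rw [hLT, hL0] at this
  exact (mul_left_cancel₀ (ne_of_gt hcard) this.symm)

/-- Theorem gz: pairwise exchangeability of the imputed sample and the resample.
Assume the coordinates of `X` are mutually conditionally independent given `Z`:
`P_{X∣Z}(x; z) = Π_{i=1}^p P_{X_i∣Z}(x_i; z)`.  Then `X̂` and `X̃` are pairwise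
exchangeable: for every `S ⊆ {1, …, p}` and all `x̂, x̃`,
`Σ_{z'} Q((x̂, x̃)_S, z') = Σ_{z'} Q(x̂, x̃, z')`, where `(x̂, x̃)_S` swaps the `i`-th
coordinates of `x̂` and `x̃` for every `i ∈ S`. -/
theorem pairwise_exchangeability {𝒵 : Type*} [Fintype 𝒵] {T p : ℕ}
    {𝒳 : Fin p → Type*} [∀ i, Fintype (𝒳 i)] [∀ i, DecidableEq (𝒳 i)]
    (hT : 0 < T) (hp : 0 < p)
    (P : (∀ i, 𝒳 i) × (Fin T → 𝒵) → ℝ)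
    (hpos : ∀ a, 0 < P a) (hsum : ∑ a, P a = 1)
    (hci : ∀ (x : ∀ i, 𝒳 i) (z : Fin T → 𝒵),
      P (x, z) / margZ P z = ∏ i : Fin p, condXi P i (x i) z) :
    ∀ (S : Finset (Fin p)) (xh xt : ∀ i, 𝒳 i),
      (∑ z' : Fin T → 𝒵,
          Q P (fun i => if i ∈ S then xt i else xh i)
            (fun i => if i ∈ S then xh i else xt i) z')
        = ∑ z' : Fin T → 𝒵, Q P xh xt z' := by

  intro S xh xt
  have hne : Nonempty ((∀ i, 𝒳 i) × (Fin T → 𝒵)) := by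
    by_contra h
    rw [not_nonempty_iff] at h
    haveI := h
    rw [Finset.univ_eq_empty, Finset.sum_empty] at hsum
    norm_num at hsum
  obtain ⟨⟨x0, z0⟩⟩ := hne
  haveI : Nonempty (∀ i, 𝒳 i) := ⟨x0⟩
  haveI : Nonempty 𝒵 := ⟨z0 ⟨0, hT⟩⟩
  refine Finset.sum_congr rfl (fun z' _ => ?_)
  have hm : 0 < margZ P z' := Finset.sum_pos (fun x _ => hpos _) Finset.univ_nonempty
  have key : ∀ a b : ∀ i, 𝒳 i, Q P a b z'
      = margZ P z' * ∏ i, (condXi P i (a i) z' * condXi P i (b i) z') := by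
    intro a b
    unfold Q
    rw [gibbs_inv P hpos a z']
    have h1 := hci a z'
    have h2 := hci b z'
    have h3 : P (b, z') / margZ P z' * P (a, z')
        = (P (b, z') / margZ P z') * ((P (a, z') / margZ P z') * margZ P z') := by
      rw [div_mul_cancel₀ _ (ne_of_gt hm)]
    rw [h3, h1, h2, Finset.prod_mul_distrib]
    ring
  rw [key, key]
  congr 1
  refine Finset.prod_congr rfl (fun i _ => ?_)
  by_cases h : i ∈ S <;> simp [h, mul_comm]
end
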